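/- (Technical state-transformation lemma) Let Σ = F_q^m, V, W : Σ^n → ℂ with Σ_x|V(x)|² = Σ_e|W(e)|² = 1, F : Σ^n → Σ^n a function, and GOOD ⊆ Σ^n × Σ^n a set such that F(x+e) = x for all (x,e) ∈ GOOD, with BAD its complement. Assume (1) Σ_{(x,e)∈BAD} |V̂(x)Ŵ(e)|² ≤ ε and (2) Σ_{z∈Σ^n} |Σ_{(x,e)∈BAD : x+e=z} V̂(x)Ŵ(e)|² ≤ δ. Then the ℓ² distance between the vector (over pairs registers) obtained by applying: Fourier transform to both registers, then (x,e) ↦ (x, x+e), then (x,z) ↦ (x − F(z), z), then inverse Fourier transform on the second register, to the vector Σ_{x,e} V(x)W(e)|x⟩|e⟩, and the vector |Σ|^{n/2} Σ_z (V·W)(z)|0⟩|z⟩, is at most √ε + √δ. -/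

import Mathlib

open Finset

noncomputable section

variable (p : ℕ) [Fact p.Prime] (F : Type) [Field F] [Fintype F] [Algebra (ZMod p) F]

/-- `ω_p ^ Tr(x)` where `ω_p = e^{2πi/p}` and `Tr : F_q → F_p` is the field trace. -/
def chr (x : F) : ℂ :=
  Complex.exp (2 * Real.pi * Complex.I / p) ^ (Algebra.trace (ZMod p) F x).val

/-- Dot product on `Σ^n = (F_q^m)^n`, identifying it with `F_q^{nm}`. -/
def dotP (n m : ℕ) (x z : Fin n → Fin m → F) : F :=
  ∑ i, ∑ j, x i j * z i j

/-- The Fourier transform over `Σ^n` for `Σ = F_q^m`: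
`f̂(z) = |Σ|^{-n/2} ∑_x f(x) ω_p^{Tr(x·z)}`. -/
def FT (n m : ℕ) (f : (Fin n → Fin m → F) → ℂ) (z : Fin n → Fin m → F) : ℂ :=
  (↑(Real.sqrt ((Fintype.card F : ℝ) ^ (m * n))))⁻¹ *
    ∑ x : Fin n → Fin m → F, f x * chr p F (dotP F n m x z)

/-- Apply the Fourier transform to both registers of a vector on `Σ^n × Σ^n`. -/
def FTboth (n m : ℕ)
    (g : (Fin n → Fin m → F) × (Fin n → Fin m → F) → ℂ)
    (pe : (Fin n → Fin m → F) × (Fin n → Fin m → F)) : ℂ :=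
  ((↑(Real.sqrt ((Fintype.card F : ℝ) ^ (m * n))))⁻¹) ^ 2 *
    ∑ qe : (Fin n → Fin m → F) × (Fin n → Fin m → F),
      g qe * chr p F (dotP F n m qe.1 pe.1) * chr p F (dotP F n m qe.2 pe.2)

/-- Apply the inverse Fourier transform to the second register. -/
def invFTsecond (n m : ℕ)
    (g : (Fin n → Fin m → F) × (Fin n → Fin m → F) → ℂ)
    (pe : (Fin n → Fin m → F) × (Fin n → Fin m → F)) : ℂ :=
  (↑(Real.sqrt ((Fintype.card F : ℝ) ^ (m * n))))⁻¹ *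
    ∑ z : Fin n → Fin m → F, g (pe.1, z) * chr p F (- dotP F n m z pe.2)

/-- The unitary basis permutation `(x, e) ↦ (x, x + e)` acting on vectors. -/
def Uadd (n m : ℕ)
    (g : (Fin n → Fin m → F) × (Fin n → Fin m → F) → ℂ)
    (pe : (Fin n → Fin m → F) × (Fin n → Fin m → F)) : ℂ :=
  g (pe.1, pe.2 - pe.1)

/-- The unitary basis permutation `(x, z) ↦ (x - F(z), z)` acting on vectors. -/
def UFmap (n m : ℕ) (Fd : (Fin n → Fin m → F) → (Fin n → Fin m → F))
    (g : (Fin n → Fin m → F) × (Fin n → Fin m → F) → ℂ)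
    (pe : (Fin n → Fin m → F) × (Fin n → Fin m → F)) : ℂ :=
  g (pe.1 + Fd pe.2, pe.2)

/-!
After the two Fourier transforms and the two basis permutations, the amplitude of `|x⟩|z⟩` is
`V̂(x + F z) Ŵ(z - x - F z)`. If the pair `(x + F z, z - x - F z)` is good, decoding forces
`x = 0`, and `(F z, z - F z)` is the only good pair with sum `z`. So the good amplitudes form
`|0⟩ ⊗ (the good part of the convolution V̂ ∗ Ŵ)`, and by the convolution theorem the whole
convolution is `|Σ|^{n/2} (V·W)^`, whose inverse transform is the target vector. Hence the error
vector is the inverse transform of (bad amplitudes) − `|0⟩ ⊗` (bad part of the convolution); the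
inverse transform is unitary, and the two pieces have squared norms at most `ε` and `δ`.
-/

lemma sqrt_sum_norm_sub_sq_le {ι E : Type*} [Fintype ι] [SeminormedAddCommGroup E] (f g : ι → E) :
    √(∑ i, ‖f i - g i‖ ^ 2) ≤ √(∑ i, ‖f i‖ ^ 2) + √(∑ i, ‖g i‖ ^ 2) := by
  simpa [PiLp.norm_eq_of_L2] using
    norm_sub_le (WithLp.toLp 2 f : PiLp 2 fun _ : ι => E) (WithLp.toLp 2 g)

lemma sum_norm_sq_ite_fst_eq_zero {G H E : Type*} [Fintype G] [Fintype H] [Zero G]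
    [DecidableEq G] [SeminormedAddCommGroup E] (g : H → E) :
    ∑ q : G × H, ‖if q.1 = 0 then g q.2 else 0‖ ^ 2 = ∑ z, ‖g z‖ ^ 2 := by
  simp [Fintype.sum_prod_type, apply_ite]

section Decoding

variable {G : Type*} [AddCommGroup G]

/-- `UFmap Fd (Uadd g) = g ∘ shiftEquiv Fd`: after the two basis permutations, the amplitude of
`|x⟩|z⟩` is the amplitude that `shiftEquiv Fd (x, z)` had before them. -/
def shiftEquiv (Fd : G → G) : G × G ≃ G × G where
  toFun q := (q.1 + Fd q.2, q.2 - (q.1 + Fd q.2))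
  invFun r := (r.1 - Fd (r.1 + r.2), r.1 + r.2)
  left_inv q := by simp
  right_inv r := by simp

lemma shiftEquiv_apply (Fd : G → G) (q : G × G) :
    shiftEquiv Fd q = (q.1 + Fd q.2, q.2 - (q.1 + Fd q.2)) := rfl

lemma fst_eq_zero_of_shiftEquiv_mem {Fd : G → G} {GOOD : Set (G × G)}
    (hG : ∀ r ∈ GOOD, Fd (r.1 + r.2) = r.1) {q : G × G} (hq : shiftEquiv Fd q ∈ GOOD) :
    q.1 = 0 := by
  have := hG _ hq
  simp only [shiftEquiv_apply, add_sub_cancel] at this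
  simpa using this.symm

lemma sum_ite_add_eq [Fintype G] [DecidableEq G] (P : G × G → ℂ) (z : G) :
    ∑ r : G × G, (if r.1 + r.2 = z then P r else 0) = ∑ x, P (x, z - x) := by
  simp [Fintype.sum_prod_type, ← eq_sub_iff_add_eq']

lemma sum_sub_sum_ite_not_mem [Fintype G] [DecidableEq G] {Fd : G → G} {GOOD : Set (G × G)}
    [DecidablePred (· ∈ GOOD)]
    (hG : ∀ r ∈ GOOD, Fd (r.1 + r.2) = r.1) (P : G × G → ℂ) (z : G) :
    ∑ x, P (x, z - x) - ∑ r, (if r ∉ GOOD ∧ r.1 + r.2 = z then P r else 0)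
      = if (Fd z, z - Fd z) ∈ GOOD then P (Fd z, z - Fd z) else 0 := by
  have hgood (r : G × G) :
      (r ∈ GOOD ∧ r.1 + r.2 = z) ↔ ((Fd z, z - Fd z) ∈ GOOD ∧ r = (Fd z, z - Fd z)) := by
    constructor
    · rintro ⟨hr, rfl⟩
      rw [hG r hr, add_sub_cancel_left]
      exact ⟨hr, rfl⟩
    · rintro ⟨hr, rfl⟩
      exact ⟨hr, add_sub_cancel _ _⟩
  rw [← sum_ite_add_eq, ← Finset.sum_sub_distrib]
  calc _ = ∑ r, (if r ∈ GOOD ∧ r.1 + r.2 = z then P r else 0) := by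
        refine Finset.sum_congr rfl fun r _ => ?_
        by_cases hr : r ∈ GOOD <;> simp [hr]
    _ = _ := by
      simp_rw [hgood, ite_and]
      split_ifs <;> simp

lemma apply_shiftEquiv_sub_ite [Fintype G] [DecidableEq G] {Fd : G → G} {GOOD : Set (G × G)}
    [DecidablePred (· ∈ GOOD)]
    (hG : ∀ r ∈ GOOD, Fd (r.1 + r.2) = r.1) (P : G × G → ℂ) (q : G × G) :
    P (shiftEquiv Fd q) - (if q.1 = 0 then ∑ x, P (x, q.2 - x) else 0)
      = (if shiftEquiv Fd q ∉ GOOD then P (shiftEquiv Fd q) else 0)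
        - (if q.1 = 0 then ∑ r, (if r ∉ GOOD ∧ r.1 + r.2 = q.2 then P r else 0) else 0) := by
  by_cases hq : q.1 = 0
  · have hshift : shiftEquiv Fd q = (Fd q.2, q.2 - Fd q.2) := by simp [shiftEquiv_apply, hq]
    have hfiber := sum_sub_sum_ite_not_mem hG P q.2
    simp only [hshift, if_pos hq]
    split_ifs at hfiber ⊢ <;> linear_combination -hfiber
  · have hbad : shiftEquiv Fd q ∉ GOOD := fun h => hq (fst_eq_zero_of_shiftEquiv_mem hG h)
    simp [hq, hbad]

end Decoding

section Fourier

open scoped Classical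

variable {n m : ℕ}

local notation "𝕍" => Fin n → Fin m → F

local notation "𝔰" => ((Real.sqrt ((Fintype.card F : ℝ) ^ (m * n)) : ℝ) : ℂ)

omit [Fintype F] in
lemma chr_eq_stdAddChar (x : F) :
    chr p F x = ZMod.stdAddChar (Algebra.trace (ZMod p) F x) := by
  rw [chr, ZMod.stdAddChar_apply, ZMod.toCircle_apply, ← Complex.exp_nat_mul]
  congr 1
  ring

omit [Fintype F] in
def chrAddChar : AddChar F ℂ :=
  ZMod.stdAddChar.compAddMonoidHom (Algebra.trace (ZMod p) F).toAddMonoidHom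

omit [Fintype F] in
@[simp]
lemma coe_chrAddChar : ⇑(chrAddChar p F) = chr p F := by
  ext x
  rw [chr_eq_stdAddChar]
  rfl

omit [Fintype F] in
lemma chr_add (x y : F) : chr p F (x + y) = chr p F x * chr p F y := by
  simpa using (chrAddChar p F).map_add_eq_mul x y

lemma chr_neg (x : F) : chr p F (-x) = starRingEnd ℂ (chr p F x) := by
  simpa using (chrAddChar p F).map_neg_eq_conj x

omit [Fintype F] in
def dotPHom (z : 𝕍) : 𝕍 →+ F where
  toFun x := dotP F n m x z
  map_zero' := by simp [dotP]
  map_add' x y := by simp [dotP, add_mul, Finset.sum_add_distrib]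

omit [Fintype F] in
lemma dotP_comm (x z : 𝕍) : dotP F n m x z = dotP F n m z x := by
  simp only [dotP, mul_comm]

omit [Fintype F] in
lemma dotP_sub_left (x y z : 𝕍) : dotP F n m (x - y) z = dotP F n m x z - dotP F n m y z :=
  map_sub (dotPHom F z) x y

omit [Fintype F] in
lemma dotP_single (x : F) (z : 𝕍) (i : Fin n) (j : Fin m) :
    dotP F n m (Pi.single i (Pi.single j x)) z = x * z i j := by
  rw [dotP, Finset.sum_eq_single i, Finset.sum_eq_single j] <;>
    simp +contextual [Pi.single_apply]

omit [Fintype F] in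
def dotChar (z : 𝕍) : AddChar 𝕍 ℂ :=
  (chrAddChar p F).compAddMonoidHom (dotPHom F z)

omit [Fintype F] in
lemma dotChar_apply (z x : 𝕍) : dotChar p F z x = chr p F (dotP F n m x z) := by
  rw [dotChar, AddChar.compAddMonoidHom_apply, coe_chrAddChar]
  rfl

lemma dotChar_eq_zero_iff (z : 𝕍) : dotChar p F z = 0 ↔ z = 0 := by
  refine ⟨fun h => ?_, fun h => by ext x; simp [dotChar_apply, h, dotP, chr]⟩
  by_contra! hz
  obtain ⟨i, j, hij⟩ : ∃ i j, z i j ≠ 0 := by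
    by_contra! h0
    exact hz (funext fun i => funext (h0 i))
  obtain ⟨s, hs⟩ : ∃ s : F, Algebra.trace (ZMod p) F s ≠ 0 := by
    by_contra! h
    exact Algebra.trace_ne_zero (ZMod p) F (LinearMap.ext h)
  have := DFunLike.congr_fun h (Pi.single i (Pi.single j (s / z i j)))
  rw [dotChar_apply, dotP_single, div_mul_cancel₀ _ hij, chr_eq_stdAddChar, AddChar.zero_apply,
    ← (ZMod.stdAddChar (N := p)).map_zero_eq_one] at this
  exact hs (ZMod.injective_stdAddChar this)

lemma sum_chr_dotP (z : 𝕍) :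
    ∑ x : 𝕍, chr p F (dotP F n m x z) = if z = 0 then (Fintype.card 𝕍 : ℂ) else 0 := by
  simp_rw [← dotChar_apply, AddChar.sum_eq_ite, dotChar_eq_zero_iff]

lemma sum_mul_sum_chr_dotP (f g : 𝕍 → ℂ) :
    ∑ x : 𝕍, (∑ a, f a * chr p F (dotP F n m a x)) * (∑ b, g b * chr p F (-dotP F n m b x))
      = Fintype.card 𝕍 * ∑ a, f a * g a := by
  have hchr (a b x : 𝕍) : chr p F (dotP F n m a x) * chr p F (-dotP F n m b x)
      = chr p F (dotP F n m x (a - b)) := by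
    rw [← chr_add, ← sub_eq_add_neg, ← dotP_sub_left, dotP_comm]
  calc _ = ∑ a, ∑ b, f a * g b * ∑ x : 𝕍, chr p F (dotP F n m x (a - b)) := by
        simp_rw [Finset.sum_mul_sum, Finset.mul_sum]
        rw [Finset.sum_comm]
        refine Finset.sum_congr rfl fun a _ => ?_
        rw [Finset.sum_comm]
        refine Finset.sum_congr rfl fun b _ => Finset.sum_congr rfl fun x _ => ?_
        rw [← hchr]
        ring
    _ = _ := by
        simp_rw [sum_chr_dotP, sub_eq_zero, mul_ite, mul_zero, Finset.sum_ite_eq,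
          Finset.mem_univ, if_true, Finset.mul_sum]
        exact Finset.sum_congr rfl fun a _ => by ring

lemma ofReal_sqrt_card_sq : 𝔰 ^ 2 = Fintype.card 𝕍 := by
  rw [← Complex.ofReal_pow, Real.sq_sqrt (by positivity)]
  simp [← pow_mul, mul_comm]

lemma ofReal_sqrt_card_ne_zero : 𝔰 ≠ 0 := by
  have h : (Fintype.card 𝕍 : ℂ) ≠ 0 := Nat.cast_ne_zero.2 Fintype.card_ne_zero
  rw [← ofReal_sqrt_card_sq] at h
  exact pow_ne_zero_iff two_ne_zero |>.1 h

def invFT (g : 𝕍 → ℂ) (e : 𝕍) : ℂ :=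
  𝔰⁻¹ * ∑ z, g z * chr p F (-dotP F n m z e)

lemma invFT_FT (f : 𝕍 → ℂ) : invFT p F (FT p F n m f) = f := by
  ext e
  have hdelta (z : 𝕍) : chr p F (-dotP F n m z e)
      = ∑ b, (if b = e then 1 else 0) * chr p F (-dotP F n m b z) := by
    simp [dotP_comm F z e]
  have hsq := ofReal_sqrt_card_sq F (n := n) (m := m)
  have hs := ofReal_sqrt_card_ne_zero F (n := n) (m := m)
  simp_rw [invFT, FT, hdelta, mul_assoc, ← Finset.mul_sum, sum_mul_sum_chr_dotP, ← hsq]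
  simp only [mul_ite, mul_one, mul_zero, Finset.sum_ite_eq', Finset.mem_univ, if_true]
  field_simp

lemma sum_norm_sq_invFT (g : 𝕍 → ℂ) : ∑ e, ‖invFT p F g e‖ ^ 2 = ∑ z, ‖g z‖ ^ 2 := by
  have hsq := ofReal_sqrt_card_sq F (n := n) (m := m)
  have hs := ofReal_sqrt_card_ne_zero F (n := n) (m := m)
  apply Complex.ofReal_injective
  push_cast
  simp_rw [← Complex.mul_conj', invFT, map_mul, map_inv₀, Complex.conj_ofReal, map_sum, map_mul,
    ← chr_neg, neg_neg]
  calc _ = 𝔰⁻¹ * 𝔰⁻¹ * ∑ x : 𝕍, (∑ a, starRingEnd ℂ (g a) * chr p F (dotP F n m a x))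
        * (∑ b, g b * chr p F (-dotP F n m b x)) := by
        rw [Finset.mul_sum]
        exact Finset.sum_congr rfl fun x _ => by ring
    _ = _ := by
        rw [sum_mul_sum_chr_dotP, ← hsq]
        field_simp
        exact Finset.sum_congr rfl fun a _ => mul_comm _ _

lemma sum_FT_mul_FT_sub (V W : 𝕍 → ℂ) (z : 𝕍) :
    ∑ x, FT p F n m V x * FT p F n m W (z - x) = 𝔰 * FT p F n m (V * W) z := by
  have hsq := ofReal_sqrt_card_sq F (n := n) (m := m)
  have hs := ofReal_sqrt_card_ne_zero F (n := n) (m := m)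
  have hshift (b x : 𝕍) : W b * chr p F (dotP F n m b (z - x))
      = (W b * chr p F (dotP F n m b z)) * chr p F (-dotP F n m b x) := by
    rw [dotP_comm F b, dotP_sub_left, sub_eq_add_neg, chr_add, dotP_comm F z, dotP_comm F x]
    ring
  simp_rw [FT, hshift, mul_mul_mul_comm, ← Finset.mul_sum, sum_mul_sum_chr_dotP, ← hsq]
  field_simp
  exact Finset.sum_congr rfl fun a _ => by simp only [Pi.mul_apply]

lemma FTboth_mul_apply (V W : 𝕍 → ℂ) (r : 𝕍 × 𝕍) :
    FTboth p F n m (fun qe => V qe.1 * W qe.2) r = FT p F n m V r.1 * FT p F n m W r.2 := by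
  rw [FTboth, FT, FT, Fintype.sum_prod_type, mul_mul_mul_comm, Finset.sum_mul_sum, sq]
  congr 1
  exact Finset.sum_congr rfl fun a _ => Finset.sum_congr rfl fun b _ => by ring

lemma invFT_sum_FT_mul_FT_sub (V W : 𝕍 → ℂ) (e : 𝕍) :
    invFT p F (fun z => ∑ x, FT p F n m V x * FT p F n m W (z - x)) e = 𝔰 * (V e * W e) := by
  have hlin : invFT p F (fun z => 𝔰 * FT p F n m (V * W) z) e
      = 𝔰 * invFT p F (FT p F n m (V * W)) e := by
    simp only [invFT, Finset.mul_sum]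
    exact Finset.sum_congr rfl fun z _ => by ring
  simp_rw [sum_FT_mul_FT_sub, hlin, invFT_FT, Pi.mul_apply]

lemma invFTsecond_apply (g : 𝕍 × 𝕍 → ℂ) (pe : 𝕍 × 𝕍) :
    invFTsecond p F n m g pe = invFT p F (fun z => g (pe.1, z)) pe.2 := rfl

lemma sum_norm_sq_invFTsecond (g : 𝕍 × 𝕍 → ℂ) :
    ∑ pe, ‖invFTsecond p F n m g pe‖ ^ 2 = ∑ pe, ‖g pe‖ ^ 2 := by
  simp only [Fintype.sum_prod_type, invFTsecond_apply, sum_norm_sq_invFT]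

lemma invFTsecond_sub (g₁ g₂ : 𝕍 × 𝕍 → ℂ) :
    invFTsecond p F n m (g₁ - g₂) = invFTsecond p F n m g₁ - invFTsecond p F n m g₂ := by
  ext pe
  simp [invFTsecond, sub_mul, mul_sub]

lemma invFTsecond_ite_fst_eq_zero (g : 𝕍 → ℂ) (pe : 𝕍 × 𝕍) :
    invFTsecond p F n m (fun q => if q.1 = 0 then g q.2 else 0) pe
      = if pe.1 = 0 then invFT p F g pe.2 else 0 := by
  split_ifs with h <;> simp [invFTsecond, invFT, h]

end Fourier

open scoped Classical in
theorem stmt_12 (n m : ℕ) (V W : (Fin n → Fin m → F) → ℂ)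
    (Fd : (Fin n → Fin m → F) → (Fin n → Fin m → F))
    (GOOD : Set ((Fin n → Fin m → F) × (Fin n → Fin m → F)))
    (hG : ∀ pe ∈ GOOD, Fd (pe.1 + pe.2) = pe.1)
    (ε δ : ℝ)
    (h1 : ∑ pe : (Fin n → Fin m → F) × (Fin n → Fin m → F),
        (if pe ∉ GOOD then ‖FT p F n m V pe.1 * FT p F n m W pe.2‖ ^ 2 else 0)
        ≤ ε)
    (h2 : ∑ z : Fin n → Fin m → F,
        ‖∑ pe : (Fin n → Fin m → F) × (Fin n → Fin m → F),
          if pe ∉ GOOD ∧ pe.1 + pe.2 = z then FT p F n m V pe.1 * FT p F n m W pe.2 else 0‖ ^ 2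
        ≤ δ) :
    Real.sqrt (∑ pe : (Fin n → Fin m → F) × (Fin n → Fin m → F),
        ‖(invFTsecond p F n m
              (UFmap F n m Fd (Uadd F n m (FTboth p F n m (fun qe => V qe.1 * W qe.2)))) pe
            - (↑(Real.sqrt ((Fintype.card F : ℝ) ^ (m * n))) *
                if pe.1 = 0 then V pe.2 * W pe.2 else 0))‖ ^ 2)
      ≤ Real.sqrt ε + Real.sqrt δ := by
  set P : (Fin n → Fin m → F) × (Fin n → Fin m → F) → ℂ :=
    fun r => FT p F n m V r.1 * FT p F n m W r.2
  set B : (Fin n → Fin m → F) → ℂ := fun z => ∑ r, if r ∉ GOOD ∧ r.1 + r.2 = z then P r else 0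
  set σ := shiftEquiv Fd
  have hdiff (pe) : invFTsecond p F n m
        (UFmap F n m Fd (Uadd F n m (FTboth p F n m (fun qe => V qe.1 * W qe.2)))) pe
      - ↑(Real.sqrt ((Fintype.card F : ℝ) ^ (m * n))) * (if pe.1 = 0 then V pe.2 * W pe.2 else 0)
      = invFTsecond p F n m
          (fun q => (if σ q ∉ GOOD then P (σ q) else 0) - if q.1 = 0 then B q.2 else 0) pe := by
    rw [mul_ite, mul_zero, ← invFT_sum_FT_mul_FT_sub p F V W, ← invFTsecond_ite_fst_eq_zero,
      ← Pi.sub_apply, ← invFTsecond_sub]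
    congr 1
    ext q
    simp only [Pi.sub_apply, UFmap, Uadd, FTboth_mul_apply]
    exact apply_shiftEquiv_sub_ite hG P q
  have hbad : ∑ q, ‖if σ q ∉ GOOD then P (σ q) else 0‖ ^ 2
      = ∑ r, if r ∉ GOOD then ‖P r‖ ^ 2 else 0 := by
    rw [Equiv.sum_comp σ (fun r => ‖if r ∉ GOOD then P r else 0‖ ^ 2)]
    exact Finset.sum_congr rfl fun r _ => by split_ifs <;> simp
  calc _ = √(∑ q, ‖(if σ q ∉ GOOD then P (σ q) else 0) - if q.1 = 0 then B q.2 else 0‖ ^ 2) := by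
        simp_rw [hdiff, sum_norm_sq_invFTsecond]
    _ ≤ √(∑ q, ‖if σ q ∉ GOOD then P (σ q) else 0‖ ^ 2)
        + √(∑ q : (Fin n → Fin m → F) × (Fin n → Fin m → F), ‖if q.1 = 0 then B q.2 else 0‖ ^ 2) :=
        sqrt_sum_norm_sub_sq_le _ _
    _ ≤ √ε + √δ := by
        rw [hbad, sum_norm_sq_ite_fst_eq_zero B]
        exact add_le_add (Real.sqrt_le_sqrt h1) (Real.sqrt_le_sqrt h2)

end
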